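/- Fix positive integers n, d, L and reals ρ ≥ 0, β ≥ 0. There exists a constant C ≥ 0, depending only on ρ, β, n, d, L, such that the following holds: for every σ : ℝ → ℝ that is ρ-Lipschitz with σ(0) = 0, all n×n matrices A and A_SG with ‖A‖ ≤ β and ‖A_SG‖ ≤ β, every n×d matrix X with ‖X‖ ≤ β, and every family of d×d weight matrices W^(0), …, W^(L−1) with ‖W^(l)‖ ≤ β for all l, the exact GCN forward recursion (Z^(l), H^(l)) and the SG forward recursion (Z_SG^(l), H_SG^(l)) (same X, same weights, A replaced by A_SG) satisfy ‖Z_SG^(l) − Z^(l)‖ ≤ C·‖A_SG − A‖ and ‖H_SG^(l) − H^(l)‖ ≤ C·‖A_SG − A‖ for all 1 ≤ l ≤ L. -/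

import Mathlib

attribute [local instance] Matrix.normedAddCommGroup

/-- The activations of the GCN forward recursion: `gcnH A X W σ 0 = X` and
`gcnH A X W σ (l+1) = σ(A * gcnH A X W σ l * W l)` entrywise. -/
noncomputable def gcnH {n d : ℕ} (A : Matrix (Fin n) (Fin n) ℝ)
    (X : Matrix (Fin n) (Fin d) ℝ) (W : ℕ → Matrix (Fin d) (Fin d) ℝ)
    (σ : ℝ → ℝ) : ℕ → Matrix (Fin n) (Fin d) ℝ
  | 0 => X
  | l + 1 => (A * gcnH A X W σ l * W l).map σ

/-- The pre-activations of the GCN forward recursion: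
`gcnZ A X W σ (l+1) = A * gcnH A X W σ l * W l` (the value at index 0 is junk). -/
noncomputable def gcnZ {n d : ℕ} (A : Matrix (Fin n) (Fin n) ℝ)
    (X : Matrix (Fin n) (Fin d) ℝ) (W : ℕ → Matrix (Fin d) (Fin d) ℝ)
    (σ : ℝ → ℝ) : ℕ → Matrix (Fin n) (Fin d) ℝ
  | 0 => 0
  | l + 1 => A * gcnH A X W σ l * W l

/-!
Write `c = n d β²` for the gain of one layer `H ↦ A H W` in the entrywise sup norm, and
`Δ = ‖A_SG - A‖`. By induction `‖H^(l)‖ ≤ (ρ c)^l β`. Splitting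
`A_SG H_SG W - A H W = (A_SG - A) H_SG W + A (H_SG - H) W` gives the error recursion
`δ_{l+1} ≤ ρ c ((ρ c)^l Δ + δ_l)` for `δ_l = ‖H_SG^(l) - H^(l)‖`,
whence `δ_l ≤ l (ρ c)^l Δ`, and similarly `‖Z_SG^(l+1) - Z^(l+1)‖ ≤ (l + 1) c (ρ c)^l Δ`.
For `l ≤ L` all of these are at most `L (1 + c) (1 + ρ c)^L Δ`.
-/

namespace Matrix

theorem norm_mul_le_card_mul {l m p α : Type*} [Fintype l] [Fintype m] [Fintype p]
    [NonUnitalNormedRing α] (A : Matrix l m α) (B : Matrix m p α) :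
    ‖A * B‖ ≤ Fintype.card m * ‖A‖ * ‖B‖ := by
  rw [norm_le_iff (by positivity)]
  intro i j
  calc ‖(A * B) i j‖ ≤ ∑ k, ‖A i k‖ * ‖B k j‖ :=
        (norm_sum_le _ _).trans (Finset.sum_le_sum fun k _ => norm_mul_le _ _)
    _ ≤ ∑ _k : m, ‖A‖ * ‖B‖ := by
        gcongr <;> exact norm_entry_le_entrywise_sup_norm _
    _ = Fintype.card m * ‖A‖ * ‖B‖ := by
        rw [Finset.sum_const, Finset.card_univ, nsmul_eq_mul, mul_assoc]

theorem norm_mul_mul_le_card_mul {l m p q α : Type*} [Fintype l] [Fintype m] [Fintype p]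
    [Fintype q] [NonUnitalNormedRing α] (A : Matrix l m α) (B : Matrix m p α)
    (C : Matrix p q α) :
    ‖A * B * C‖ ≤ Fintype.card m * Fintype.card p * ‖A‖ * ‖B‖ * ‖C‖ := by
  calc ‖A * B * C‖ ≤ Fintype.card p * (Fintype.card m * ‖A‖ * ‖B‖) * ‖C‖ := by
        refine (norm_mul_le_card_mul _ _).trans ?_
        gcongr
        exact norm_mul_le_card_mul A B
    _ = Fintype.card m * Fintype.card p * ‖A‖ * ‖B‖ * ‖C‖ := by ring

theorem norm_map_sub_map_le {m p : Type*} [Fintype m] [Fintype p] {σ : ℝ → ℝ} {ρ : ℝ}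
    (hρ : 0 ≤ ρ) (hσ : ∀ x y, |σ x - σ y| ≤ ρ * |x - y|) (M N : Matrix m p ℝ) :
    ‖M.map σ - N.map σ‖ ≤ ρ * ‖M - N‖ := by
  rw [norm_le_iff (by positivity)]
  intro i j
  calc ‖σ (M i j) - σ (N i j)‖ ≤ ρ * ‖M i j - N i j‖ := hσ _ _
    _ ≤ ρ * ‖M - N‖ := by gcongr; exact norm_entry_le_entrywise_sup_norm (M - N)

theorem norm_map_le {m p : Type*} [Fintype m] [Fintype p] {σ : ℝ → ℝ} {ρ : ℝ}
    (hρ : 0 ≤ ρ) (hσ : ∀ x y, |σ x - σ y| ≤ ρ * |x - y|) (hσ0 : σ 0 = 0) (M : Matrix m p ℝ) :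
    ‖M.map σ‖ ≤ ρ * ‖M‖ := by
  simpa [hσ0] using norm_map_sub_map_le hρ hσ M 0

end Matrix

open Matrix

section Bounds

variable {n d : ℕ} {A A' : Matrix (Fin n) (Fin n) ℝ} {X : Matrix (Fin n) (Fin d) ℝ}
  {W : ℕ → Matrix (Fin d) (Fin d) ℝ} {σ : ℝ → ℝ} {ρ β : ℝ}

theorem gcnH_succ (l : ℕ) : gcnH A X W σ (l + 1) = (gcnZ A X W σ (l + 1)).map σ := rfl

theorem norm_gcnH_le (hρ : 0 ≤ ρ) (hβ : 0 ≤ β) (hσ : ∀ x y, |σ x - σ y| ≤ ρ * |x - y|)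
    (hσ0 : σ 0 = 0) (hA : ‖A‖ ≤ β) (hX : ‖X‖ ≤ β) :
    ∀ l, (∀ k < l, ‖W k‖ ≤ β) → ‖gcnH A X W σ l‖ ≤ (ρ * (n * d * β ^ 2)) ^ l * β
  | 0, _ => by simpa [gcnH] using hX
  | l + 1, hW => by
    have ih := norm_gcnH_le hρ hβ hσ hσ0 hA hX l fun k hk => hW k (by omega)
    calc ‖gcnH A X W σ (l + 1)‖ ≤ ρ * (n * d * ‖A‖ * ‖gcnH A X W σ l‖ * ‖W l‖) :=
          (norm_map_le hρ hσ hσ0 _).trans (by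
            gcongr
            simpa using norm_mul_mul_le_card_mul A _ (W l))
      _ ≤ ρ * (n * d * β * ((ρ * (n * d * β ^ 2)) ^ l * β) * β) := by
          gcongr; exact hW l (by omega)
      _ = (ρ * (n * d * β ^ 2)) ^ (l + 1) * β := by ring

theorem gcnZ_succ_sub_gcnZ_succ (l : ℕ) :
    gcnZ A' X W σ (l + 1) - gcnZ A X W σ (l + 1) =
      (A' - A) * gcnH A' X W σ l * W l + A * (gcnH A' X W σ l - gcnH A X W σ l) * W l := by
  simp only [gcnZ, Matrix.sub_mul, Matrix.mul_sub]
  abel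

theorem norm_gcnZ_succ_sub_le (l : ℕ) :
    ‖gcnZ A' X W σ (l + 1) - gcnZ A X W σ (l + 1)‖ ≤
      n * d * ‖W l‖ *
        (‖A' - A‖ * ‖gcnH A' X W σ l‖ + ‖A‖ * ‖gcnH A' X W σ l - gcnH A X W σ l‖) := by
  rw [gcnZ_succ_sub_gcnZ_succ]
  refine (norm_add_le _ _).trans ?_
  have h₁ := norm_mul_mul_le_card_mul (A' - A) (gcnH A' X W σ l) (W l)
  have h₂ := norm_mul_mul_le_card_mul A (gcnH A' X W σ l - gcnH A X W σ l) (W l)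
  simp only [Fintype.card_fin] at h₁ h₂
  linarith

theorem norm_gcnZ_succ_sub_le_of_norm_gcnH_sub_le (hρ : 0 ≤ ρ) (hβ : 0 ≤ β)
    (hσ : ∀ x y, |σ x - σ y| ≤ ρ * |x - y|) (hσ0 : σ 0 = 0) (hA : ‖A‖ ≤ β) (hA' : ‖A'‖ ≤ β)
    (hX : ‖X‖ ≤ β) {l : ℕ} (hW : ∀ k ≤ l, ‖W k‖ ≤ β)
    (hδ : ‖gcnH A' X W σ l - gcnH A X W σ l‖ ≤ l * (ρ * (n * d * β ^ 2)) ^ l * ‖A' - A‖) :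
    ‖gcnZ A' X W σ (l + 1) - gcnZ A X W σ (l + 1)‖ ≤
      (l + 1) * (n * d * β ^ 2) * (ρ * (n * d * β ^ 2)) ^ l * ‖A' - A‖ := by
  have hH' := norm_gcnH_le hρ hβ hσ hσ0 hA' hX l fun k hk => hW k hk.le
  calc ‖gcnZ A' X W σ (l + 1) - gcnZ A X W σ (l + 1)‖
      ≤ n * d * β * (‖A' - A‖ * ((ρ * (n * d * β ^ 2)) ^ l * β) +
          β * (l * (ρ * (n * d * β ^ 2)) ^ l * ‖A' - A‖)) :=
        (norm_gcnZ_succ_sub_le l).trans (by gcongr; exact hW l le_rfl)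
    _ = (l + 1) * (n * d * β ^ 2) * (ρ * (n * d * β ^ 2)) ^ l * ‖A' - A‖ := by ring

theorem norm_gcnH_sub_le (hρ : 0 ≤ ρ) (hβ : 0 ≤ β) (hσ : ∀ x y, |σ x - σ y| ≤ ρ * |x - y|)
    (hσ0 : σ 0 = 0) (hA : ‖A‖ ≤ β) (hA' : ‖A'‖ ≤ β) (hX : ‖X‖ ≤ β) :
    ∀ l, (∀ k < l, ‖W k‖ ≤ β) →
      ‖gcnH A' X W σ l - gcnH A X W σ l‖ ≤ l * (ρ * (n * d * β ^ 2)) ^ l * ‖A' - A‖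
  | 0, _ => by simp [gcnH]
  | l + 1, hW => by
    have hW' : ∀ k ≤ l, ‖W k‖ ≤ β := fun k hk => hW k (by omega)
    have hZ := norm_gcnZ_succ_sub_le_of_norm_gcnH_sub_le hρ hβ hσ hσ0 hA hA' hX hW'
      (norm_gcnH_sub_le hρ hβ hσ hσ0 hA hA' hX l fun k hk => hW' k hk.le)
    calc ‖gcnH A' X W σ (l + 1) - gcnH A X W σ (l + 1)‖
        ≤ ρ * ((l + 1) * (n * d * β ^ 2) * (ρ * (n * d * β ^ 2)) ^ l * ‖A' - A‖) := by
          rw [gcnH_succ, gcnH_succ]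
          exact (norm_map_sub_map_le hρ hσ _ _).trans (by gcongr)
      _ = ↑(l + 1) * (ρ * (n * d * β ^ 2)) ^ (l + 1) * ‖A' - A‖ := by push_cast; ring

end Bounds

theorem gcn_activation_error_bounded_general {n d L : ℕ}
    {ρ β : ℝ} (hρ : 0 ≤ ρ) (hβ : 0 ≤ β) :
    ∃ C : ℝ, 0 ≤ C ∧
      ∀ (σ : ℝ → ℝ), (∀ x y : ℝ, |σ x - σ y| ≤ ρ * |x - y|) → σ 0 = 0 →
      ∀ (A ASG : Matrix (Fin n) (Fin n) ℝ), ‖A‖ ≤ β → ‖ASG‖ ≤ β →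
      ∀ (X : Matrix (Fin n) (Fin d) ℝ), ‖X‖ ≤ β →
      ∀ (W : ℕ → Matrix (Fin d) (Fin d) ℝ), (∀ l, l < L → ‖W l‖ ≤ β) →
      ∀ l, 1 ≤ l → l ≤ L →
        ‖gcnZ ASG X W σ l - gcnZ A X W σ l‖ ≤ C * ‖ASG - A‖ ∧
        ‖gcnH ASG X W σ l - gcnH A X W σ l‖ ≤ C * ‖ASG - A‖ := by
  set c : ℝ := n * d * β ^ 2
  have hc : 0 ≤ c := by positivity
  have pow_le : ∀ k ≤ L, (ρ * c) ^ k ≤ (1 + ρ * c) ^ L := fun k hk =>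
    (pow_le_pow_left₀ (by positivity) (by linarith) k).trans
      (pow_le_pow_right₀ (by linarith [mul_nonneg hρ hc]) hk)
  refine ⟨L * (1 + c) * (1 + ρ * c) ^ L, by positivity, ?_⟩
  intro σ hσ hσ0 A ASG hA hASG X hX W hW l hl hlL
  obtain ⟨k, rfl⟩ : ∃ k, l = k + 1 := ⟨l - 1, by omega⟩
  have hWk : ∀ j < k + 1, ‖W j‖ ≤ β := fun j hj => hW j (by omega)
  have hkL : (k : ℝ) + 1 ≤ L := by exact_mod_cast hlL
  have hδ := norm_gcnH_sub_le hρ hβ hσ hσ0 hA hASG hX k fun j hj => hWk j (by omega)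
  have hZ := norm_gcnZ_succ_sub_le_of_norm_gcnH_sub_le hρ hβ hσ hσ0 hA hASG hX
    (fun j hj => hWk j (by omega)) hδ
  have hH := norm_gcnH_sub_le hρ hβ hσ hσ0 hA hASG hX (k + 1) hWk
  push_cast at hH
  refine ⟨hZ.trans ?_, hH.trans ?_⟩
  · gcongr
    · linarith
    · exact pow_le k (by omega)
  · gcongr
    · nlinarith [mul_nonneg (Nat.cast_nonneg L : (0 : ℝ) ≤ L) hc]
    · exact pow_le (k + 1) hlL

/-- Lemma 1: for a multi-layer GCN with fixed weights, there is a constant `C`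
(depending only on ρ, β, n, d, L) such that the activations and pre-activations
of the SG estimator (using `A_SG` in place of `A`) differ from the exact ones by
at most `C * ‖A_SG - A‖` in each layer `1 ≤ l ≤ L`. -/
theorem gcn_activation_error_bounded {n d L : ℕ} (hn : 0 < n) (hd : 0 < d) (hL : 0 < L)
    {ρ β : ℝ} (hρ : 0 ≤ ρ) (hβ : 0 ≤ β) :
    ∃ C : ℝ, 0 ≤ C ∧
      ∀ (σ : ℝ → ℝ), (∀ x y : ℝ, |σ x - σ y| ≤ ρ * |x - y|) → σ 0 = 0 →
      ∀ (A ASG : Matrix (Fin n) (Fin n) ℝ), ‖A‖ ≤ β → ‖ASG‖ ≤ β →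
      ∀ (X : Matrix (Fin n) (Fin d) ℝ), ‖X‖ ≤ β →
      ∀ (W : ℕ → Matrix (Fin d) (Fin d) ℝ), (∀ l, l < L → ‖W l‖ ≤ β) →
      ∀ l, 1 ≤ l → l ≤ L →
        ‖gcnZ ASG X W σ l - gcnZ A X W σ l‖ ≤ C * ‖ASG - A‖ ∧
        ‖gcnH ASG X W σ l - gcnH A X W σ l‖ ≤ C * ‖ASG - A‖ :=
  gcn_activation_error_bounded_general hρ hβ
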